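/- Let R be a commutative unital ring, I an ideal of R, and M an R-module that is both flat and I-coreduced. Then the inverse system {I^k ⊗_R M}_{k≥1}, with transition maps induced by the inclusions I^{k+1} ⊆ I^k, satisfies the Mittag-Leffler condition; in fact all the transition maps I^{k+1} ⊗_R M → I^k ⊗_R M (k ≥ 1) are isomorphisms, since I^k ⊗_R M ≅ I^k M = IM for every k ≥ 1. -/
import Mathlib


/-!
STATEMENT 15: Let `R` be a commutative unital ring, `I` an ideal of `R`, and `M` an
`R`-module that is both flat and `I`-coreduced. Then the inverse system `{I^k ⊗_R M}_{k ≥ 1}`,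
with transition maps induced by the inclusions `I^{k+1} ⊆ I^k`, satisfies the Mittag-Leffler
condition; in fact all the transition maps are isomorphisms, since
`I^k ⊗_R M ≅ I^k M = IM` for every `k ≥ 1`.
-/

universe u

open TensorProduct

/-- The inverse system `k ↦ I^(k+1) ⊗_R M` with transition maps induced by the inclusions
`I^(l+1) ⊆ I^(k+1)` for `k ≤ l`. -/
noncomputable def tensorPowDiagram (R : Type u) [CommRing R] (I : Ideal R) (M : Type u)
    [AddCommGroup M] [Module R M] :
    ∀ k l : ℕ, k ≤ l → (↥(I ^ (l + 1)) ⊗[R] M) →ₗ[R] (↥(I ^ (k + 1)) ⊗[R] M) :=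
  fun _ _ h =>
    LinearMap.rTensor M (Submodule.inclusion (Ideal.pow_le_pow_right (by omega)))

section Aux

variable (R : Type u) [CommRing R] (M : Type u) [AddCommGroup M] [Module R M]

/-- The multiplication map `J ⊗ M → M`. -/
noncomputable def idealMul (J : Ideal R) : (↥J ⊗[R] M) →ₗ[R] M :=
  (TensorProduct.lid R M).toLinearMap.comp (LinearMap.rTensor M J.subtype)

lemma idealMul_tmul (J : Ideal R) (x : J) (m : M) :
    idealMul R M J (x ⊗ₜ m) = (x : R) • m := rfl

lemma idealMul_injective (J : Ideal R) (hflat : Module.Flat R M) :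
    Function.Injective (idealMul R M J) := by
  have h1 : Function.Injective (LinearMap.rTensor M J.subtype) :=
    Module.Flat.rTensor_preserves_injective_linearMap _ Subtype.val_injective
  exact (TensorProduct.lid R M).injective.comp h1

lemma idealMul_range (J : Ideal R) :
    LinearMap.range (idealMul R M J) = J • (⊤ : Submodule R M) := by
  apply le_antisymm
  · rintro _ ⟨x, rfl⟩
    induction x with
    | zero => simp
    | tmul r m => exact Submodule.smul_mem_smul r.2 trivial
    | add x y hx hy => rw [map_add]; exact Submodule.add_mem _ hx hy
  · refine Submodule.smul_le.2 fun r hr m _ => ⟨⟨r, hr⟩ ⊗ₜ m, rfl⟩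

end Aux

theorem stmt15 (R : Type u) [CommRing R] (I : Ideal R) (M : Type u) [AddCommGroup M]
    [Module R M] (hflat : Module.Flat R M)
    (hcor : I ^ 2 • (⊤ : Submodule R M) = I • (⊤ : Submodule R M)) :
    (∀ (k l : ℕ) (h : k ≤ l), Function.Bijective (tensorPowDiagram R I M k l h)) ∧
    (∀ k : ℕ, ∃ j : ℕ, ∃ hkj : k ≤ j, ∀ l : ℕ, ∀ hjl : j ≤ l,
      LinearMap.range (tensorPowDiagram R I M k l (hkj.trans hjl)) =
        LinearMap.range (tensorPowDiagram R I M k j hkj)) ∧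
    (∀ k : ℕ,
      Nonempty ((↥(I ^ (k + 1)) ⊗[R] M) ≃ₗ[R] ↥(I ^ (k + 1) • (⊤ : Submodule R M))) ∧
      I ^ (k + 1) • (⊤ : Submodule R M) = I • (⊤ : Submodule R M)) := by
  have hpow : ∀ k : ℕ, I ^ (k + 1) • (⊤ : Submodule R M) = I • (⊤ : Submodule R M) := by
    intro k
    induction k with
    | zero => rw [pow_one]
    | succ n ih =>
      calc I ^ (n + 2) • (⊤ : Submodule R M) = (I ^ n * I ^ 2) • (⊤ : Submodule R M) := by
            rw [← pow_add]
        _ = I ^ n • (I ^ 2 • (⊤ : Submodule R M)) := mul_smul _ _ _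
        _ = I ^ n • (I • (⊤ : Submodule R M)) := by rw [hcor]
        _ = (I ^ n * I) • (⊤ : Submodule R M) := (mul_smul _ _ _).symm
        _ = I ^ (n + 1) • (⊤ : Submodule R M) := by rw [← pow_succ]
        _ = I • (⊤ : Submodule R M) := ih
  have hcomp : ∀ (k l : ℕ) (h : k ≤ l),
      (idealMul R M (I ^ (k + 1))).comp (tensorPowDiagram R I M k l h)
        = idealMul R M (I ^ (l + 1)) := by
    intro k l h
    ext x m
    rfl
  have hinj : ∀ J : Ideal R, Function.Injective (idealMul R M J) :=
    fun J => idealMul_injective R M J hflat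
  have hbij : ∀ (k l : ℕ) (h : k ≤ l), Function.Bijective (tensorPowDiagram R I M k l h) := by
    intro k l h
    constructor
    · have : Function.Injective ((idealMul R M (I ^ (k + 1))).comp
        (tensorPowDiagram R I M k l h)) := by rw [hcomp]; exact hinj _
      rw [LinearMap.coe_comp] at this; exact Function.Injective.of_comp this
    · intro y
      have hy : idealMul R M (I ^ (k + 1)) y ∈ LinearMap.range (idealMul R M (I ^ (l + 1))) := by
        rw [idealMul_range, hpow]
        have : idealMul R M (I ^ (k + 1)) y ∈ LinearMap.range (idealMul R M (I ^ (k + 1))) :=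
          ⟨y, rfl⟩
        rwa [idealMul_range, hpow] at this
      obtain ⟨x, hx⟩ := hy
      refine ⟨x, hinj (I ^ (k + 1)) ?_⟩
      rw [← LinearMap.comp_apply, hcomp, hx]
  refine ⟨hbij, fun k => ⟨k, le_refl k, fun l hl => ?_⟩, fun k => ⟨⟨?_⟩, hpow k⟩⟩
  · rw [LinearMap.range_eq_top.2 (hbij k l hl).2, LinearMap.range_eq_top.2 (hbij k k le_rfl).2]
  · exact (LinearEquiv.ofInjective _ (hinj (I ^ (k + 1)))).trans
      (LinearEquiv.ofEq _ _ (idealMul_range R M (I ^ (k + 1))))
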